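/- Let A be the two-dimensional commutative ℂ-algebra spanned by the unit 1 and an idempotent v (v² = v), let α ∈ ℂ with α ≠ −1, and define Δ : A → A ⊗ A by Δ(1) = 1 ⊗ 1 and Δ(v) = v ⊗ 1 + 1 ⊗ v + α·(v ⊗ v). Then Δ is coassociative, the map ε given by ε(1) = 1, ε(v) = 0 is a counit and an algebra homomorphism, and the functional φ given by φ(v) = 1, φ(1) = −α is a faithful left invariant functional, so that (A, Δ) is a finite quantum hypergroup (with antipode the identity map). -/

import Mathlib

/-!
Every identity to be checked is linear in each variable, so it suffices to check it on the
basis `{1, v}`; on `v`, coassociativity is the associativity of the formal group law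
`x + y + α x y`. Since `A` is commutative, the right-hand side of the left-integral identity
(with `S = ι`) is `B(c, a)` for the bilinear map `B(a, c) = (ι ⊗ φ)(Δ(a)(1 ⊗ c))`, so the
identity says that `B` is symmetric. On the basis this reduces to `B(1, v) = B(v, 1)`, and both
sides equal `φ(v) 1`, the second by left invariance. Faithfulness is tested against `v` and
`1 - v`, which gives `a.1 = 0` and `(α + 1) a.2 = 0`.
-/

open TensorProduct

noncomputable section

/-- The two-dimensional commutative algebra `ℂ × ℂ`, spanned by its unit `1 = (1,1)`
and the idempotent `v = (1,0)`. -/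
abbrev A2 : Type := ℂ × ℂ

/-- The idempotent `v`. -/
def vA : A2 := (1, 0)

/-- `Δ(v) = v ⊗ 1 + 1 ⊗ v + α • (v ⊗ v)`. -/
def Dv (α : ℂ) : A2 ⊗[ℂ] A2 :=
  vA ⊗ₜ[ℂ] (1 : A2) + (1 : A2) ⊗ₜ[ℂ] vA + α • (vA ⊗ₜ[ℂ] vA)

/-- The coproduct on `A2`, the unique linear map with `Δ 1 = 1 ⊗ 1` and
`Δ v = v ⊗ 1 + 1 ⊗ v + α • (v ⊗ v)`. -/
def Δ2 (α : ℂ) : A2 →ₗ[ℂ] A2 ⊗[ℂ] A2 where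
  toFun x := x.1 • Dv α + x.2 • ((1 : A2) ⊗ₜ[ℂ] (1 : A2) - Dv α)
  map_add' x y := by
    simp only [Prod.fst_add, Prod.snd_add, add_smul]
    abel
  map_smul' c x := by
    simp only [Prod.smul_fst, Prod.smul_snd, smul_eq_mul, mul_smul, RingHom.id_apply,
      smul_add]

/-- The counit `ε` with `ε 1 = 1`, `ε v = 0`. -/
def ε2 : A2 →ₗ[ℂ] ℂ := LinearMap.snd ℂ ℂ ℂ

/-- The functional `φ` with `φ v = 1`, `φ 1 = -α`. -/
def φ2 (α : ℂ) : A2 →ₗ[ℂ] ℂ where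
  toFun x := x.1 - (α + 1) * x.2
  map_add' x y := by simp; ring
  map_smul' c x := by simp; ring

/-- `(ε ⊗ ι)` as a map. -/
def lmapC (ε : A2 →ₗ[ℂ] ℂ) : A2 ⊗[ℂ] A2 →ₗ[ℂ] A2 :=
  (TensorProduct.lid ℂ A2).toLinearMap ∘ₗ TensorProduct.map ε LinearMap.id

/-- `(ι ⊗ ε)` as a map. -/
def rmapC (ε : A2 →ₗ[ℂ] ℂ) : A2 ⊗[ℂ] A2 →ₗ[ℂ] A2 :=
  (TensorProduct.rid ℂ A2).toLinearMap ∘ₗ TensorProduct.map LinearMap.id ε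

lemma vA_mul_self : vA * vA = vA := by
  ext <;> simp [vA]

lemma eq_smul_one_add_smul_vA (x : A2) : x = x.2 • (1 : A2) + (x.1 - x.2) • vA := by
  ext <;> simp [vA]

lemma A2.linearMap_ext {M : Type*} [AddCommMonoid M] [Module ℂ M] {f g : A2 →ₗ[ℂ] M}
    (h1 : f 1 = g 1) (hv : f vA = g vA) : f = g := by
  refine LinearMap.ext fun x => ?_
  rw [eq_smul_one_add_smul_vA x, map_add, map_add, map_smul, map_smul, map_smul, map_smul, h1,
    hv]

lemma A2.flip_eq_self {M : Type*} [AddCommMonoid M] [Module ℂ M]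
    (B : A2 →ₗ[ℂ] A2 →ₗ[ℂ] M) (h : B 1 vA = B vA 1) : B.flip = B :=
  A2.linearMap_ext (A2.linearMap_ext rfl h.symm) (A2.linearMap_ext h rfl)

lemma Δ2_one (α : ℂ) : Δ2 α 1 = (1 : A2) ⊗ₜ[ℂ] (1 : A2) := by
  simp [Δ2]

lemma Δ2_vA (α : ℂ) : Δ2 α vA = Dv α := by
  simp [Δ2, vA]

lemma rmapC_tmul (f : A2 →ₗ[ℂ] ℂ) (x y : A2) : rmapC f (x ⊗ₜ[ℂ] y) = f y • x := by
  simp [rmapC]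

lemma lmapC_tmul (f : A2 →ₗ[ℂ] ℂ) (x y : A2) : lmapC f (x ⊗ₜ[ℂ] y) = f x • y := by
  simp [lmapC]

lemma ε2_one : ε2 1 = 1 := rfl
lemma ε2_vA : ε2 vA = 0 := rfl
lemma ε2_mul (x y : A2) : ε2 (x * y) = ε2 x * ε2 y := rfl

lemma φ2_one (α : ℂ) : φ2 α 1 = -α := by simp [φ2]
lemma φ2_vA (α : ℂ) : φ2 α vA = 1 := by simp [φ2, vA]

lemma Δ2_coassoc (α : ℂ) :
    (TensorProduct.assoc ℂ A2 A2 A2).toLinearMap ∘ₗ TensorProduct.map (Δ2 α) LinearMap.id ∘ₗ Δ2 α =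
      TensorProduct.map LinearMap.id (Δ2 α) ∘ₗ Δ2 α := by
  refine A2.linearMap_ext ?_ ?_
  · simp [Δ2_one]
  · simp only [LinearMap.comp_apply, Δ2_vA, Dv, map_add, map_smul, TensorProduct.map_tmul,
      LinearMap.id_apply, Δ2_one, LinearEquiv.coe_coe, TensorProduct.add_tmul,
      TensorProduct.tmul_add, TensorProduct.smul_tmul, TensorProduct.tmul_smul,
      TensorProduct.assoc_tmul]
    module

lemma lmapC_ε2_comp_Δ2 (α : ℂ) : lmapC ε2 ∘ₗ Δ2 α = LinearMap.id := by
  refine A2.linearMap_ext ?_ ?_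
  · simp [Δ2_one, lmapC_tmul, ε2_one]
  · simp [Δ2_vA, Dv, lmapC_tmul, ε2_one, ε2_vA]

lemma rmapC_ε2_comp_Δ2 (α : ℂ) : rmapC ε2 ∘ₗ Δ2 α = LinearMap.id := by
  refine A2.linearMap_ext ?_ ?_
  · simp [Δ2_one, rmapC_tmul, ε2_one]
  · simp [Δ2_vA, Dv, rmapC_tmul, ε2_one, ε2_vA]

lemma rmapC_φ2_comp_Δ2 (α : ℂ) : rmapC (φ2 α) ∘ₗ Δ2 α = (φ2 α).smulRight 1 := by
  refine A2.linearMap_ext ?_ ?_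
  · simp [Δ2_one, rmapC_tmul]
  · simp [Δ2_vA, Dv, rmapC_tmul, φ2_one, φ2_vA]

lemma φ2_faithful {α : ℂ} (hα : α ≠ -1) (a : A2) (h : ∀ c : A2, φ2 α (a * c) = 0) : a = 0 := by
  have hfst : a.1 = 0 := by simpa [φ2, vA] using h vA
  have hsnd : (α + 1) * a.2 = 0 := by simpa [φ2] using h (0, 1)
  have hα' : α + 1 ≠ 0 := fun h => hα (eq_neg_of_add_eq_zero_left h)
  exact Prod.ext hfst ((mul_eq_zero.mp hsnd).resolve_left hα')

def leftIntegralForm (α : ℂ) : A2 →ₗ[ℂ] A2 →ₗ[ℂ] A2 :=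
  ((LinearMap.mul ℂ (A2 ⊗[ℂ] A2)).compl₁₂ (Δ2 α) (TensorProduct.mk ℂ A2 A2 1)).compr₂
    (rmapC (φ2 α))

lemma leftIntegralForm_apply (α : ℂ) (a c : A2) :
    leftIntegralForm α a c = rmapC (φ2 α) (Δ2 α a * ((1 : A2) ⊗ₜ[ℂ] c)) := rfl

lemma leftIntegralForm_flip (α : ℂ) : (leftIntegralForm α).flip = leftIntegralForm α := by
  refine A2.flip_eq_self _ ?_
  have hinv := LinearMap.congr_fun (rmapC_φ2_comp_Δ2 α) vA
  rw [LinearMap.comp_apply] at hinv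
  rw [leftIntegralForm_apply, leftIntegralForm_apply, Δ2_one, ← Algebra.TensorProduct.one_def,
    one_mul, mul_one, hinv, rmapC_tmul]
  rfl

/-- For `α ≠ -1`, the algebra `A2 = ℂ × ℂ` with the coproduct `Δ2 α`
is a finite quantum hypergroup: `Δ2 α` is unital and coassociative, `ε2` is a
counit and an algebra homomorphism, and `φ2 α` is a faithful left invariant
functional which is a left integral with antipode the identity map (an
anti-isomorphism since `A2` is commutative). -/
theorem two_dim_quantum_hypergroup (α : ℂ) (hα : α ≠ -1) :
    -- v is an idempotent and {1, v} spans A2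
    (vA * vA = vA) ∧
    (∀ x : A2, ∃ c d : ℂ, x = c • (1 : A2) + d • vA) ∧
    -- Δ is unital with the prescribed value on v
    (Δ2 α 1 = (1 : A2) ⊗ₜ[ℂ] (1 : A2)) ∧
    (Δ2 α vA = vA ⊗ₜ[ℂ] (1 : A2) + (1 : A2) ⊗ₜ[ℂ] vA + α • (vA ⊗ₜ[ℂ] vA)) ∧
    -- coassociativity
    (∀ a : A2,
      (TensorProduct.assoc ℂ A2 A2 A2)
          (TensorProduct.map (Δ2 α) LinearMap.id (Δ2 α a)) =
        TensorProduct.map LinearMap.id (Δ2 α) (Δ2 α a)) ∧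
    -- ε2 is a counit and an algebra homomorphism
    (∀ a : A2, lmapC ε2 (Δ2 α a) = a) ∧
    (∀ a : A2, rmapC ε2 (Δ2 α a) = a) ∧
    (∀ x y : A2, ε2 (x * y) = ε2 x * ε2 y) ∧ (ε2 (1 : A2) = 1) ∧
    -- values of φ2
    (φ2 α vA = 1) ∧ (φ2 α (1 : A2) = -α) ∧
    -- φ2 is faithful
    (∀ a : A2, (∀ c : A2, φ2 α (a * c) = 0) → a = 0) ∧
    -- φ2 is left invariant
    (∀ a : A2, rmapC (φ2 α) (Δ2 α a) = φ2 α a • (1 : A2)) ∧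
    -- φ2 is a left integral with antipode the identity map
    (∀ a c : A2,
      rmapC (φ2 α) (Δ2 α a * ((1 : A2) ⊗ₜ[ℂ] c)) =
        rmapC (φ2 α) (((1 : A2) ⊗ₜ[ℂ] a) * Δ2 α c)) := by
  refine ⟨vA_mul_self, fun x => ⟨_, _, eq_smul_one_add_smul_vA x⟩, Δ2_one α, Δ2_vA α,
    fun a => LinearMap.congr_fun (Δ2_coassoc α) a,
    fun a => LinearMap.congr_fun (lmapC_ε2_comp_Δ2 α) a,
    fun a => LinearMap.congr_fun (rmapC_ε2_comp_Δ2 α) a, ε2_mul, ε2_one, φ2_vA α, φ2_one α,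
    φ2_faithful hα, fun a => LinearMap.congr_fun (rmapC_φ2_comp_Δ2 α) a, fun a c => ?_⟩
  rw [mul_comm ((1 : A2) ⊗ₜ[ℂ] a)]
  exact LinearMap.congr_fun₂ (leftIntegralForm_flip α) c a

end
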